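/- Let N ≥ 3 be an integer, let α₁, …, α_N be real numbers with sin α_n ≠ 0 for all n and α₁ + ⋯ + α_N = 2π, and let L₁, …, L_N be positive reals (indices mod N). Set θ_n = α₁ + ⋯ + α_{n−1}, U₀ = (0,0) ∈ ℝ², and U_n = L_n(cos θ_n, sin θ_n). Define spoke stresses σ_n = csc α_n / L_{n+1} + csc α_{n−1} / L_{n−1} − (cot α_n + cot α_{n−1}) / L_n. Then for every n ∈ {1, …, N}: σ_n (U_n − U₀)/L_n − (csc α_{n−1}/(L_{n−1} L_n)) (U_n − U_{n−1}) − (csc α_n/(L_n L_{n+1})) (U_n − U_{n+1}) = 0. -/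

import Mathlib

/-!
Write `e t = (cos t, sin t)`. Since `e (t + a) = cos a • e t + sin a • e (t + π/2)`, the
perpendicular parts cancel in `e (t + a) / sin a + e (t - b) / sin b = (cot a + cot b) • e t`.
At spoke vertex `n` take `t = θ n`, `a = α n`, `b = α (n - 1)`, so that the neighbours are
`L (n + 1) • e (t + a)` and `L (n - 1) • e (t - b)`; the force balance is then this identity
divided by `L n`. At `n = 1` and `n = N` the neighbours wrap around, which is harmless because
`θ (N + 1) = 2π`.
-/

open Real Finset Function

noncomputable def unitVec (t : ℝ) : ℝ × ℝ := (cos t, sin t)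

lemma unitVec_add (t a : ℝ) :
    unitVec (t + a) = cos a • unitVec t + sin a • unitVec (t + π / 2) := by
  ext <;> simp [unitVec, cos_add, sin_add] <;> ring

lemma unitVec_sub (t b : ℝ) :
    unitVec (t - b) = cos b • unitVec t - sin b • unitVec (t + π / 2) := by
  rw [sub_eq_add_neg, unitVec_add, cos_neg, sin_neg, neg_smul, ← sub_eq_add_neg]

lemma unitVec_add_two_pi (t : ℝ) : unitVec (t + 2 * π) = unitVec t := by
  simp [unitVec]

lemma inv_sin_smul_unitVec_add_add_inv_sin_smul_unitVec_sub {a b : ℝ}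
    (ha : sin a ≠ 0) (hb : sin b ≠ 0) (t : ℝ) :
    (sin a)⁻¹ • unitVec (t + a) + (sin b)⁻¹ • unitVec (t - b)
      = (cos a / sin a + cos b / sin b) • unitVec t := by
  rw [unitVec_add, unitVec_sub]
  match_scalars <;> field_simp
  ring

lemma spoke_balance_of_angles {a b t La Lb Ln σ : ℝ} (ha : sin a ≠ 0) (hb : sin b ≠ 0)
    (hLa : La ≠ 0) (hLb : Lb ≠ 0) (hLn : Ln ≠ 0)
    (hσ : σ = 1 / sin a / La + 1 / sin b / Lb - (cos a / sin a + cos b / sin b) / Ln) :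
    (σ / Ln) • (Ln • unitVec t - 0)
      - (1 / sin b / (Lb * Ln)) • (Ln • unitVec t - Lb • unitVec (t - b))
      - (1 / sin a / (Ln * La)) • (Ln • unitVec t - La • unitVec (t + a)) = 0 := by
  subst hσ
  have key := inv_sin_smul_unitVec_add_add_inv_sin_smul_unitVec_sub ha hb t
  linear_combination (norm := skip) Ln⁻¹ • key
  match_scalars <;> field_simp <;> ring

namespace Function.Periodic

variable {β : Type*} {f : ℕ → β} {N : ℕ}

lemma apply_ite_pred (hf : Periodic f N) (n : ℕ) :
    f (if n = 1 then N else n - 1) = f (n - 1) := by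
  split_ifs with h
  · simpa [h] using hf 0
  · rfl

lemma apply_ite_succ (hf : Periodic f N) (n : ℕ) :
    f (if n = N then 1 else n + 1) = f (n + 1) := by
  split_ifs with h
  · rw [h, add_comm, hf]
  · rfl

end Function.Periodic

section PartialSums

variable {N : ℕ} {α θ : ℕ → ℝ}

lemma partialSum_succ (hθ : ∀ n, θ n = ∑ i ∈ Ico 1 n, α i) {n : ℕ} (hn : 1 ≤ n) :
    θ (n + 1) = θ n + α n := by
  rw [hθ, hθ, sum_Ico_succ_top hn]

lemma partialSum_last_add (hθ : ∀ n, θ n = ∑ i ∈ Ico 1 n, α i)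
    (hsum : ∑ n ∈ Icc 1 N, α n = 2 * π) (hN : 1 ≤ N) : θ N + α N = 2 * π := by
  rw [← partialSum_succ hθ hN, hθ, Ico_add_one_right_eq_Icc, hsum]

lemma unitVec_partialSum_ite_pred (hθ : ∀ n, θ n = ∑ i ∈ Ico 1 n, α i)
    (hsum : ∑ n ∈ Icc 1 N, α n = 2 * π) (hα : Periodic α N) {n : ℕ} (h1 : 1 ≤ n)
    (hn : n ≤ N) : unitVec (θ (if n = 1 then N else n - 1)) = unitVec (θ n - α (n - 1)) := by
  split_ifs with h
  · have hθ1 : θ 1 = 0 := by simp [hθ]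
    have hθN : θ N = θ 1 - α 0 + 2 * π := by
      have hlast := partialSum_last_add hθ hsum (h ▸ hn)
      have hα0 : α 0 = α N := by simpa using (hα 0).symm
      linarith
    rw [h, hθN, unitVec_add_two_pi]
  · have hstep := partialSum_succ hθ (n := n - 1) (by omega)
    rw [Nat.sub_add_cancel h1] at hstep
    rw [hstep, add_sub_cancel_right]

lemma unitVec_partialSum_ite_succ (hθ : ∀ n, θ n = ∑ i ∈ Ico 1 n, α i)
    (hsum : ∑ n ∈ Icc 1 N, α n = 2 * π) {n : ℕ} (h1 : 1 ≤ n) :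
    unitVec (θ (if n = N then 1 else n + 1)) = unitVec (θ n + α n) := by
  split_ifs with h
  · have hθ1 : θ 1 = 0 := by simp [hθ]
    rw [h, partialSum_last_add hθ hsum (h ▸ h1), hθ1, ← zero_add (2 * π), unitVec_add_two_pi]
  · rw [partialSum_succ hθ h1]

end PartialSums

theorem spoke_force_balance_general (N : ℕ) (α L : ℕ → ℝ)
    (hαper : ∀ n, α (n + N) = α n) (hLper : ∀ n, L (n + N) = L n)
    (hα : ∀ n, 1 ≤ n → n ≤ N → Real.sin (α n) ≠ 0)
    (hsum : ∑ n ∈ Icc 1 N, α n = 2 * Real.pi)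
    (hL : ∀ n, 1 ≤ n → n ≤ N → 0 < L n)
    (θ : ℕ → ℝ) (hθ : ∀ n, θ n = ∑ i ∈ Ico 1 n, α i)
    (U : ℕ → ℝ × ℝ) (hU0 : U 0 = 0)
    (hU : ∀ n, 1 ≤ n → n ≤ N → U n = L n • (Real.cos (θ n), Real.sin (θ n)))
    (σ : ℕ → ℝ)
    (hσ : ∀ n, σ n = (1 / Real.sin (α n)) / L (n + 1)
      + (1 / Real.sin (α (n - 1))) / L (n - 1)
      - (Real.cos (α n) / Real.sin (α n) + Real.cos (α (n - 1)) / Real.sin (α (n - 1))) / L n) :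
    ∀ n, 1 ≤ n → n ≤ N →
      (σ n / L n) • (U n - U 0)
        - ((1 / Real.sin (α (n - 1))) / (L (n - 1) * L n))
            • (U n - U (if n = 1 then N else n - 1))
        - ((1 / Real.sin (α n)) / (L n * L (n + 1)))
            • (U n - U (if n = N then 1 else n + 1)) = 0 := by
  intro n h1 hn
  set p := if n = 1 then N else n - 1 with hp
  set q := if n = N then 1 else n + 1 with hq
  have hp_mem : 1 ≤ p ∧ p ≤ N := by split_ifs at hp <;> omega
  have hq_mem : 1 ≤ q ∧ q ≤ N := by split_ifs at hq <;> omega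
  have hUp : U p = L (n - 1) • unitVec (θ n - α (n - 1)) := by
    rw [hU p hp_mem.1 hp_mem.2, ← Periodic.apply_ite_pred hLper,
      ← unitVec_partialSum_ite_pred hθ hsum hαper h1 hn]
    rfl
  have hUq : U q = L (n + 1) • unitVec (θ n + α n) := by
    rw [hU q hq_mem.1 hq_mem.2, ← Periodic.apply_ite_succ hLper,
      ← unitVec_partialSum_ite_succ hθ hsum h1]
    rfl
  rw [hU0, hUp, hUq, hU n h1 hn]
  refine spoke_balance_of_angles (hα n h1 hn) ?_ ?_ ?_ (hL n h1 hn).ne' (hσ n)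
  · rw [← Periodic.apply_ite_pred hαper]; exact hα p hp_mem.1 hp_mem.2
  · rw [← Periodic.apply_ite_succ hLper]; exact (hL q hq_mem.1 hq_mem.2).ne'
  · rw [← Periodic.apply_ite_pred hLper]; exact (hL p hp_mem.1 hp_mem.2).ne'

open Finset in
/-- Force balance at each spoke vertex of the wheel self stress of an unfolded origami vertex:
with the hub at `U 0 = 0`, spoke vertices `U n = L n • (cos θ n, sin θ n)`, sector angles
`α n` (cyclic mod `N`, summing to `2π`), spoke lengths `L n > 0` and spoke stresses
`σ n = csc α_n / L_{n+1} + csc α_{n-1} / L_{n-1} - (cot α_n + cot α_{n-1}) / L_n`, one has,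
for every `n ∈ {1, …, N}` (spoke neighbour indices taken cyclically in `{1, …, N}`),
`σ_n (U_n - U_0)/L_n - (csc α_{n-1}/(L_{n-1} L_n)) (U_n - U_{n-1})
  - (csc α_n/(L_n L_{n+1})) (U_n - U_{n+1}) = 0`. -/
theorem spoke_force_balance (N : ℕ) (hN : 3 ≤ N) (α L : ℕ → ℝ)
    (hαper : ∀ n, α (n + N) = α n) (hLper : ∀ n, L (n + N) = L n)
    (hα : ∀ n, 1 ≤ n → n ≤ N → Real.sin (α n) ≠ 0)
    (hsum : ∑ n ∈ Icc 1 N, α n = 2 * Real.pi)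
    (hL : ∀ n, 1 ≤ n → n ≤ N → 0 < L n)
    (θ : ℕ → ℝ) (hθ : ∀ n, θ n = ∑ i ∈ Ico 1 n, α i)
    (U : ℕ → ℝ × ℝ) (hU0 : U 0 = 0)
    (hU : ∀ n, 1 ≤ n → n ≤ N → U n = L n • (Real.cos (θ n), Real.sin (θ n)))
    (σ : ℕ → ℝ)
    (hσ : ∀ n, σ n = (1 / Real.sin (α n)) / L (n + 1)
      + (1 / Real.sin (α (n - 1))) / L (n - 1)
      - (Real.cos (α n) / Real.sin (α n) + Real.cos (α (n - 1)) / Real.sin (α (n - 1))) / L n) :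
    ∀ n, 1 ≤ n → n ≤ N →
      (σ n / L n) • (U n - U 0)
        - ((1 / Real.sin (α (n - 1))) / (L (n - 1) * L n))
            • (U n - U (if n = 1 then N else n - 1))
        - ((1 / Real.sin (α n)) / (L n * L (n + 1)))
            • (U n - U (if n = N then 1 else n + 1)) = 0 :=
  spoke_force_balance_general N α L hαper hLper hα hsum hL θ hθ U hU0 hU σ hσ
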